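/- A connected graph G on n ≥ 1 vertices has metric dimension n−1 if and only if G is the complete graph K_n. -/

import Mathlib

/-- `S` resolves `G` if every pair of distinct vertices has different
distances to some vertex of `S`. -/
def Resolves {V : Type*} (G : SimpleGraph V) (S : Set V) : Prop :=
  ∀ v w : V, v ≠ w → ∃ x ∈ S, G.dist v x ≠ G.dist w x

/-- The metric dimension: the minimum cardinality of a resolving set. -/
noncomputable def metricDim {V : Type*} (G : SimpleGraph V) : ℕ :=
  sInf {n | ∃ S : Set V, Resolves G S ∧ S.ncard = n}

open SimpleGraph

section

variable {V : Type*} {G : SimpleGraph V} {S : Set V}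

/-- A vertex of `S` is separated from every other vertex by itself, at distance `0`. -/
lemma resolves_of_separates_compl (hG : G.Preconnected)
    (h : ∀ a ∉ S, ∀ b ∉ S, a ≠ b → ∃ x ∈ S, G.dist a x ≠ G.dist b x) : Resolves G S := by
  intro a b hab
  by_cases ha : a ∈ S
  · exact ⟨a, ha, by rw [dist_self]; exact ((hG b a).pos_dist_of_ne hab.symm).ne⟩
  by_cases hb : b ∈ S
  · exact ⟨b, hb, by rw [dist_self]; exact ((hG a b).pos_dist_of_ne hab).ne'⟩
  exact h a ha b hb hab

lemma resolves_of_compl_subsingleton (hG : G.Preconnected) (h : Sᶜ.Subsingleton) :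
    Resolves G S :=
  resolves_of_separates_compl hG fun _ ha _ hb hab ↦ absurd (h ha hb) hab

lemma resolves_compl_pair {u x v : V} (hG : G.Preconnected) (hvu : v ≠ u) (hvx : v ≠ x)
    (hd : G.dist u v ≠ G.dist x v) : Resolves G {u, x}ᶜ := by
  refine resolves_of_separates_compl hG fun a ha b hb hab ↦ ⟨v, by simp [hvu, hvx], ?_⟩
  simp only [Set.mem_compl_iff, Set.mem_insert_iff, Set.mem_singleton_iff, not_not] at ha hb
  rcases ha with rfl | rfl <;> rcases hb with rfl | rfl
  exacts [absurd rfl hab, hd, hd.symm, absurd rfl hab]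

lemma resolves_top_iff : Resolves (⊤ : SimpleGraph V) S ↔ Sᶜ.Subsingleton := by
  refine ⟨fun h a ha b hb ↦ ?_, resolves_of_compl_subsingleton preconnected_top⟩
  by_contra hab
  obtain ⟨x, hx, hdx⟩ := h a b hab
  rw [dist_top_of_ne (ne_of_mem_of_not_mem hx ha).symm,
    dist_top_of_ne (ne_of_mem_of_not_mem hx hb).symm] at hdx
  exact hdx rfl

lemma metricDim_le_ncard (h : Resolves G S) : metricDim G ≤ S.ncard :=
  Nat.sInf_le ⟨S, h, rfl⟩

/-- A connected graph other than `⊤` contains an induced path on three vertices. -/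
lemma SimpleGraph.Connected.exists_adj_adj_not_adj_ne (hG : G.Connected) (hne : G ≠ ⊤) :
    ∃ x a b : V, G.Adj x a ∧ G.Adj a b ∧ ¬G.Adj x b ∧ x ≠ b := by
  obtain ⟨u, v, huv, hadj⟩ := ne_top_iff_exists_not_adj.1 hne
  obtain ⟨p, hp⟩ := hG.exists_walk_length_eq_dist u v
  exact p.exists_adj_adj_not_adj_ne hp (hG.one_lt_dist_of_ne_of_not_adj huv hadj)

variable [Fintype V]

lemma metricDim_le_card_sub_one (hG : G.Preconnected) : metricDim G ≤ Fintype.card V - 1 := by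
  obtain hV | ⟨⟨v⟩⟩ := isEmpty_or_nonempty V
  · simpa using metricDim_le_ncard (resolves_of_compl_subsingleton hG (S := Set.univ) (by simp))
  calc metricDim G ≤ ({v}ᶜ : Set V).ncard := metricDim_le_ncard
        (resolves_of_compl_subsingleton hG (by simp))
    _ = Fintype.card V - 1 := by rw [Set.ncard_compl, Set.ncard_singleton, Nat.card_eq_fintype_card]

lemma metricDim_top : metricDim (⊤ : SimpleGraph V) = Fintype.card V - 1 := by
  refine (metricDim_le_card_sub_one preconnected_top).antisymm <|
    le_csInf ⟨_, Set.univ, resolves_top_iff.2 (by simp), rfl⟩ ?_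
  rintro _ ⟨S, hS, rfl⟩
  have := Set.ncard_compl_add_ncard S
  have := Set.ncard_le_one_iff_subsingleton.2 (resolves_top_iff.1 hS)
  rw [Nat.card_eq_fintype_card] at *
  omega

/-- If `x - a - b` is an induced path, `b` separates `x` from `a`, so `{x, a}ᶜ` resolves `G`. -/
lemma metricDim_lt_card_sub_one (hG : G.Connected) (hne : G ≠ ⊤) :
    metricDim G < Fintype.card V - 1 := by
  obtain ⟨x, a, b, hxa, hab, hxb, hxb'⟩ := hG.exists_adj_adj_not_adj_ne hne
  have hres : Resolves G {x, a}ᶜ := resolves_compl_pair hG.preconnected hxb'.symm hab.ne'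
    (by rw [dist_eq_one_iff_adj.2 hab]; exact mt dist_eq_one_iff_adj.1 hxb)
  have hpair : ({x, a} : Set V).ncard = 2 := Set.ncard_pair hxa.ne
  have hcard : 2 ≤ Fintype.card V := by
    simpa [hpair] using Set.ncard_le_card ({x, a} : Set V)
  calc metricDim G ≤ ({x, a}ᶜ : Set V).ncard := metricDim_le_ncard hres
    _ = Fintype.card V - 2 := by rw [Set.ncard_compl, hpair, Nat.card_eq_fintype_card]
    _ < Fintype.card V - 1 := by omega

end

theorem metricDim_eq_card_sub_one_iff_complete_general {V : Type*} [Fintype V]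
    (G : SimpleGraph V) (hG : G.Connected) :
    metricDim G = Fintype.card V - 1 ↔ G = ⊤ := by
  refine ⟨fun h ↦ ?_, fun h ↦ h ▸ metricDim_top⟩
  by_contra hne
  exact (metricDim_lt_card_sub_one hG hne).ne h

theorem metricDim_eq_card_sub_one_iff_complete {V : Type*} [Fintype V] [Nonempty V]
    (G : SimpleGraph V) (hG : G.Connected) :
    metricDim G = Fintype.card V - 1 ↔ G = ⊤ :=
  metricDim_eq_card_sub_one_iff_complete_general G hG
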